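/- arXiv:2202.10369 — 2 statements merged into one kernel-verified Lean document; each statement's English description precedes it below -/
import Mathlib

section
/- Let 0 = x₁ < x₂ < ⋯ < x_{2n+1} = 2π and let φ_m : [0,2π] → ℝ be continuous nonnegative functions with {φ_m > 0} = (x_m, x_{m+1}) for m = 1,…,2n, and let α ∈ ℝ. Then the 2n×2n complex matrix A with entries A_{km} = (1/2π) ∫₀^{2π} e^{-(ik+α)x} φ_m(x) dx, rows indexed by k = −n+1,…,n, is invertible. -/
/-!
Expanding the determinant multilinearly writes `det A` as `(2π)^{-2n}` times the integral over
`y ∈ (0, 2π]^{2n}` of `∏ φ_m(y_m)` times the determinant of `(e^{-(ik+α) y_m})`. That determinant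
is of Vandermonde type in the nodes `e^{-i y_m}`: it equals a nonzero constant times
`∏_{p<q} sin((y_q - y_p)/2) · e^{-α Σ y_m} · e^{-(i/2) Σ y_m}`. The integrand vanishes off the box
`∏ (x_m, x_{m+1})`; on the box the sine product is positive and `Σ y_m` ranges in an open interval
of length `2π`, so the phase `-Σ y_m / 2` stays in an open half-turn and the integral, rotated by a
constant, has positive imaginary part.
-/

open Complex Real MeasureTheory

/-- The matrix `A` of Fourier-type moments of the boundary data:
`A_{km} = (1/2π)∫₀^{2π} e^{-(ik+α)x} φ_m(x) dx`, rows `k = −n+1,…,n`. -/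
noncomputable def momentMatrix (n : ℕ) (α : ℝ) (φ : Fin (2 * n) → ℝ → ℝ) :
    Matrix (Fin (2 * n)) (Fin (2 * n)) ℂ :=
  Matrix.of fun k m =>
    (1 / (2 * (π : ℂ))) * ∫ t in (0:ℝ)..(2 * π),
      Complex.exp (-(Complex.I * (((k : ℕ) : ℂ) - (n : ℂ) + 1) + (α : ℂ)) * (t : ℂ)) *
        (φ m t : ℂ)

open Set

theorem Fin.sum_sum_Ioi_add_add_sum {M : Type*} [AddCommMonoid M] {N : ℕ} (y : Fin N → M) :
    ∑ i, ∑ j ∈ Finset.Ioi i, (y i + y j) + ∑ i, y i = N • ∑ i, y i := by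
  have hswap : ∑ i, ∑ j ∈ Finset.Ioi i, y j = ∑ j, ∑ _i ∈ Finset.Iio j, y j :=
    Finset.sum_comm' (fun i j => by simp)
  calc ∑ i, ∑ j ∈ Finset.Ioi i, (y i + y j) + ∑ i, y i
      = ∑ i, ((Finset.Ioi i).card • y i + (Finset.Iio i).card • y i + y i) := by
        simp only [Finset.sum_add_distrib]
        rw [hswap]
        simp only [Finset.sum_const]
    _ = ∑ i, N • y i := by
        refine Finset.sum_congr rfl fun i _ => ?_
        rw [← add_nsmul, ← succ_nsmul, Fin.card_Ioi, Fin.card_Iio]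
        congr 1
        omega
    _ = N • ∑ i, y i := (Finset.smul_sum ..).symm

theorem exp_neg_mul_I_sub_exp_neg_mul_I (a b : ℝ) :
    exp (-(b * I)) - exp (-(a * I)) =
      -2 * I * (Real.sin ((b - a) / 2) : ℂ) * exp (-((a + b) / 2 * I)) := by
  set t : ℝ := (b - a) / 2
  rw [ofReal_sin, Complex.sin]
  have e1 : -(b * I : ℂ) = -t * I + -((a + b) / 2 * I) := by simp only [t]; push_cast; ring
  have e2 : -(a * I : ℂ) = t * I + -((a + b) / 2 * I) := by simp only [t]; push_cast; ring
  rw [e1, e2, Complex.exp_add, Complex.exp_add]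
  linear_combination (exp (-t * I) - exp (t * I)) * exp (-((a + b) / 2 * I)) * I_sq

theorem det_exp_mul_sub_I_mul {N : ℕ} (c : ℂ) (y : Fin N → ℝ) :
    (Matrix.of fun k m : Fin N => exp ((c - I * (k : ℕ)) * y m)).det =
      (∏ i : Fin N, ∏ _j ∈ Finset.Ioi i, (-2 * I)) *
        ((∏ i, ∏ j ∈ Finset.Ioi i, Real.sin ((y j - y i) / 2) : ℝ) : ℂ) *
        exp ((c - I * ((N - 1) / 2)) * ((∑ m, y m : ℝ) : ℂ)) := by
  have hvandermonde : (Matrix.of fun k m : Fin N => exp ((c - I * (k : ℕ)) * y m)) =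
      (Matrix.of fun m k => exp (c * y m) *
        Matrix.vandermonde (fun m => exp (-(y m * I))) m k).transpose := by
    ext k m
    simp only [Matrix.of_apply, Matrix.transpose_apply, Matrix.vandermonde,
      ← Complex.exp_nat_mul, ← Complex.exp_add]
    ring_nf
  have hphase : (∏ i : Fin N, ∏ j ∈ Finset.Ioi i, exp (-((y i + y j : ℂ) / 2 * I))) *
      ∏ m, exp (c * y m) = exp ((c - I * ((N - 1) / 2)) * ((∑ m, y m : ℝ) : ℂ)) := by
    simp only [← Complex.exp_sum, ← Complex.exp_add]
    congr 1
    push_cast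
    simp only [Finset.sum_neg_distrib, ← Finset.sum_mul, ← Finset.mul_sum, ← Finset.sum_div]
    linear_combination (-I / 2) * Fin.sum_sum_Ioi_add_add_sum (fun m => (y m : ℂ))
  rw [hvandermonde, Matrix.det_transpose, Matrix.det_mul_column, Matrix.det_vandermonde,
    ← hphase]
  simp only [exp_neg_mul_I_sub_exp_neg_mul_I, Finset.prod_mul_distrib, ofReal_prod]
  ring

section DetIntegral

variable {ι α 𝕜 : Type*} [Fintype ι] [DecidableEq ι] [RCLike 𝕜] [MeasurableSpace α]
  {μ : Measure α} [SigmaFinite μ] {f : ι → ι → α → 𝕜}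

theorem Matrix.integrable_det_of_apply (hf : ∀ k m, Integrable (f k m) μ) :
    Integrable (fun y : ι → α => (Matrix.of fun k m => f k m (y m)).det)
      (Measure.pi fun _ => μ) := by
  simp only [Matrix.det_apply, Matrix.of_apply]
  exact integrable_finsetSum _ fun σ _ =>
    (Integrable.fintype_prod fun m => hf (σ m) m).smul _

theorem Matrix.det_integral_eq_integral_det (hf : ∀ k m, Integrable (f k m) μ) :
    (Matrix.of fun k m => ∫ t, f k m t ∂μ).det =
      ∫ y, (Matrix.of fun k m => f k m (y m)).det ∂(Measure.pi fun _ => μ) := by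
  simp only [Matrix.det_apply, Matrix.of_apply, Units.smul_def, zsmul_eq_mul]
  rw [integral_finsetSum _ fun σ _ => (Integrable.fintype_prod fun m => hf (σ m) m).const_mul _]
  refine Finset.sum_congr rfl fun σ _ => ?_
  rw [integral_const_mul, integral_fintype_prod_eq_prod (fun m t => f (σ m) m t)]

end DetIntegral

theorem integral_ofReal_mul_exp_mul_I_ne_zero {X : Type*} [MeasurableSpace X] {μ : Measure X}
    {g θ : X → ℝ} {θ₀ : ℝ} {U : Set X}
    (hint : Integrable (fun y => (g y : ℂ) * exp (θ y * I)) μ) (hU : 0 < μ U)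
    (hpos : ∀ y ∈ U, 0 < g y ∧ θ y ∈ Ioo θ₀ (θ₀ + π))
    (hzero : ∀ᵐ y ∂μ, y ∉ U → g y = 0) :
    ∫ y, (g y : ℂ) * exp (θ y * I) ∂μ ≠ 0 := by
  have hrotate : ∀ y, (exp (-(θ₀ * I)) * ((g y : ℂ) * exp (θ y * I))).im =
      g y * Real.sin (θ y - θ₀) := fun y => by
    rw [mul_left_comm, ← Complex.exp_add, show -(θ₀ * I) + θ y * I = ((θ y - θ₀ : ℝ) : ℂ) * I by
      push_cast; ring, im_ofReal_mul, exp_ofReal_mul_I_im]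
  have hint_im : Integrable (fun y => g y * Real.sin (θ y - θ₀)) μ := by
    simpa only [RCLike.im_to_complex, hrotate] using (hint.const_mul (exp (-(θ₀ * I)))).im
  have him : (exp (-(θ₀ * I)) * ∫ y, (g y : ℂ) * exp (θ y * I) ∂μ).im =
      ∫ y, g y * Real.sin (θ y - θ₀) ∂μ := by
    rw [← integral_const_mul, ← RCLike.im_to_complex,
      ← integral_im (hint.const_mul (exp (-(θ₀ * I))))]
    simp only [RCLike.im_to_complex, hrotate]
  have hsin : ∀ y ∈ U, 0 < g y * Real.sin (θ y - θ₀) := fun y hy => by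
    obtain ⟨hg, hθ₁, hθ₂⟩ := hpos y hy
    exact mul_pos hg (Real.sin_pos_of_pos_of_lt_pi (by linarith) (by linarith))
  have hnonneg : 0 ≤ᵐ[μ] fun y => g y * Real.sin (θ y - θ₀) := by
    filter_upwards [hzero] with y hy
    by_cases hyU : y ∈ U
    · exact (hsin y hyU).le
    · simp [hy hyU]
  have hpos_integral : 0 < ∫ y, g y * Real.sin (θ y - θ₀) ∂μ :=
    (integral_pos_iff_support_of_nonneg_ae hnonneg hint_im).mpr
      (hU.trans_le (measure_mono fun y hy => (hsin y hy).ne'))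
  intro h
  rw [h, mul_zero, zero_im] at him
  exact hpos_integral.ne him

def cellBox {K : ℕ} (x : Fin (K + 1) → ℝ) : Set (Fin K → ℝ) :=
  Set.univ.pi fun m => Ioo (x m.castSucc) (x m.succ)

section CellBox

variable {K : ℕ} {x : Fin (K + 1) → ℝ} {y : Fin K → ℝ}

theorem Ioo_castSucc_succ_subset (hx : Monotone x) (m : Fin K) :
    Ioo (x m.castSucc) (x m.succ) ⊆ Ioo (x 0) (x (Fin.last K)) :=
  Ioo_subset_Ioo (hx (Fin.zero_le _)) (hx (Fin.le_last _))

theorem prod_sin_pos_of_mem_cellBox (hx : Monotone x) (hlen : x (Fin.last K) - x 0 ≤ 2 * π)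
    (hy : y ∈ cellBox x) : 0 < ∏ i, ∏ j ∈ Finset.Ioi i, Real.sin ((y j - y i) / 2) := by
  refine Finset.prod_pos fun i _ => Finset.prod_pos fun j hij => ?_
  have hsucc : x i.succ ≤ x j.castSucc := hx (Fin.succ_le_castSucc_iff.2 (Finset.mem_Ioi.1 hij))
  have hi := Ioo_castSucc_succ_subset hx i (hy i trivial)
  have hj := Ioo_castSucc_succ_subset hx j (hy j trivial)
  have hlt : y i < y j := (hy i trivial).2.trans_le (hsucc.trans (hy j trivial).1.le)
  exact Real.sin_pos_of_pos_of_lt_pi (by linarith) (by linarith [hi.1, hj.2])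

theorem sum_mem_Ioo_of_mem_cellBox [NeZero K] (hy : y ∈ cellBox x) :
    ∑ m, y m ∈
      Ioo (∑ m : Fin K, x m.castSucc) (∑ m : Fin K, x m.castSucc + (x (Fin.last K) - x 0)) := by
  have htelescope :
      ∑ m : Fin K, x m.succ = ∑ m : Fin K, x m.castSucc + (x (Fin.last K) - x 0) := by
    linarith [Fin.sum_univ_succ x, Fin.sum_univ_castSucc x]
  rw [← htelescope]
  exact ⟨Finset.sum_lt_sum_of_nonempty Finset.univ_nonempty fun m _ => (hy m trivial).1,
    Finset.sum_lt_sum_of_nonempty Finset.univ_nonempty fun m _ => (hy m trivial).2⟩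

theorem prod_pos_of_mem_cellBox {φ : Fin K → ℝ → ℝ} {s : Set ℝ}
    (hsupp : ∀ m, ∀ t ∈ s, 0 < φ m t ↔ t ∈ Ioo (x m.castSucc) (x m.succ))
    (hys : ∀ m, y m ∈ s) (hy : y ∈ cellBox x) : 0 < ∏ m, φ m (y m) :=
  Finset.prod_pos fun m _ => (hsupp m _ (hys m)).2 (hy m trivial)

theorem prod_eq_zero_of_notMem_cellBox {φ : Fin K → ℝ → ℝ} {s : Set ℝ}
    (hpos : ∀ m t, 0 ≤ φ m t)
    (hsupp : ∀ m, ∀ t ∈ s, 0 < φ m t ↔ t ∈ Ioo (x m.castSucc) (x m.succ))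
    (hys : ∀ m, y m ∈ s) (hy : y ∉ cellBox x) : ∏ m, φ m (y m) = 0 := by
  obtain ⟨m, -, hm⟩ := not_forall₂.1 hy
  exact Finset.prod_eq_zero (Finset.mem_univ m)
    ((hpos m (y m)).eq_of_not_lt fun h => hm ((hsupp m _ (hys m)).1 h)).symm

theorem pi_restrict_cellBox_pos (hx : StrictMono x) {s : Set ℝ}
    (hs : ∀ m : Fin K, Ioo (x m.castSucc) (x m.succ) ⊆ s) :
    0 < Measure.pi (fun _ => volume.restrict s) (cellBox x) := by
  rw [cellBox, Measure.pi_pi]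
  refine pos_iff_ne_zero.2 (Finset.prod_ne_zero_iff.2 fun m _ => (pos_iff_ne_zero.1 ?_))
  rw [Measure.restrict_apply measurableSet_Ioo, inter_eq_self_of_subset_left (hs m),
    Real.volume_Ioo, ENNReal.ofReal_pos, sub_pos]
  exact hx Fin.castSucc_lt_succ

end CellBox

theorem ae_pi_restrict_forall_mem {ι α : Type*} [Fintype ι] [MeasurableSpace α] {μ : Measure α}
    [SigmaFinite μ] {s : Set α} (hs : MeasurableSet s) :
    ∀ᵐ y ∂(Measure.pi fun _ : ι => μ.restrict s), ∀ i, y i ∈ s :=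
  ae_all_iff.2 fun _ => Measure.tendsto_eval_ae_ae.eventually (ae_restrict_mem hs)

theorem momentMatrix_eq_smul_integral (n : ℕ) (α : ℝ) (φ : Fin (2 * n) → ℝ → ℝ) :
    momentMatrix n α φ = (1 / (2 * (π : ℂ))) • Matrix.of fun k m : Fin (2 * n) =>
      ∫ t in Ioc 0 (2 * π), (φ m t : ℂ) * exp ((I * (n - 1) - α - I * (k : ℕ)) * t) := by
  ext k m
  rw [momentMatrix, Matrix.smul_apply, Matrix.of_apply, Matrix.of_apply, smul_eq_mul,
    intervalIntegral.integral_of_le (by positivity)]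
  congr 2 with t
  rw [mul_comm]
  ring_nf

theorem det_ofReal_mul_exp_moment (n : ℕ) (α : ℝ) (v y : Fin (2 * n) → ℝ) :
    (Matrix.of fun k m : Fin (2 * n) =>
        (v m : ℂ) * exp ((I * (n - 1) - α - I * (k : ℕ)) * y m)).det =
      (∏ i : Fin (2 * n), ∏ _j ∈ Finset.Ioi i, (-2 * I)) *
        (((∏ m, v m) * (∏ i, ∏ j ∈ Finset.Ioi i, Real.sin ((y j - y i) / 2)) *
          Real.exp (-(α * ∑ m, y m)) : ℝ) * exp ((-(∑ m, y m) / 2 : ℝ) * I)) := by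
  have hrow := Matrix.det_mul_row (fun m => (v m : ℂ))
    (Matrix.of fun k m : Fin (2 * n) => exp ((I * (n - 1) - α - I * (k : ℕ)) * y m))
  simp only [Matrix.of_apply] at hrow
  -- the centred row indices `k - n + 1` make the phase exactly `-(1/2) ∑ y_m`
  have hphase : exp ((I * (n - 1) - α - I * ((((2 * n : ℕ) : ℂ) - 1) / 2)) * (∑ m, y m : ℝ)) =
      exp ((-(α * ∑ m, y m) : ℝ) : ℂ) * exp ((-(∑ m, y m) / 2 : ℝ) * I) := by
    rw [← Complex.exp_add]
    push_cast
    ring_nf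
  rw [hrow, det_exp_mul_sub_I_mul, hphase]
  push_cast
  ring

/-- If `0 = x₁ < … < x_{2n+1} = 2π` and `φ_m ≥ 0` are continuous with
`{φ_m > 0} = (x_m, x_{m+1})`, then the moment matrix `A` is invertible. -/
theorem momentMatrix_invertible (n : ℕ) (hn : 1 ≤ n) (α : ℝ)
    (x : Fin (2 * n + 1) → ℝ) (hx : StrictMono x)
    (hx0 : x 0 = 0) (hxlast : x (Fin.last (2 * n)) = 2 * π)
    (φ : Fin (2 * n) → ℝ → ℝ)
    (hcont : ∀ m, ContinuousOn (φ m) (Set.Icc 0 (2 * π)))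
    (hpos : ∀ m t, 0 ≤ φ m t)
    (hsupp : ∀ m, ∀ t ∈ Set.Icc (0:ℝ) (2 * π),
      (0 < φ m t ↔ t ∈ Set.Ioo (x m.castSucc) (x m.succ))) :
    (momentMatrix n α φ).det ≠ 0 := by
  have : NeZero (2 * n) := ⟨by omega⟩
  have hint : ∀ k m : Fin (2 * n), IntegrableOn
      (fun t : ℝ => (φ m t : ℂ) * exp ((I * (n - 1) - α - I * (k : ℕ)) * t)) (Ioc 0 (2 * π)) :=
    fun k m => (((continuous_ofReal.comp_continuousOn (hcont m)).mul
      (by fun_prop)).integrableOn_Icc).mono_set Ioc_subset_Icc_self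
  have hc : ∏ i : Fin (2 * n), ∏ _j ∈ Finset.Ioi i, (-2 * I) ≠ 0 :=
    Finset.prod_ne_zero_iff.2 fun _ _ => Finset.prod_ne_zero_iff.2 fun _ _ =>
      mul_ne_zero (by norm_num) I_ne_zero
  have hcells : ∀ m : Fin (2 * n), Ioo (x m.castSucc) (x m.succ) ⊆ Ioc 0 (2 * π) := fun m =>
    (Ioo_castSucc_succ_subset hx.monotone m).trans (by rw [hx0, hxlast]; exact Ioo_subset_Ioc_self)
  rw [momentMatrix_eq_smul_integral, Matrix.det_smul, Matrix.det_integral_eq_integral_det hint,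
    integral_congr_ae (ae_of_all _ fun y => det_ofReal_mul_exp_moment n α (fun m => φ m (y m)) y),
    integral_const_mul]
  refine mul_ne_zero (by simp [pi_ne_zero]) (mul_ne_zero hc ?_)
  refine integral_ofReal_mul_exp_mul_I_ne_zero (θ₀ := -(∑ m : Fin (2 * n), x m.castSucc) / 2 - π)
    (U := cellBox x) ?_ (pi_restrict_cellBox_pos hx hcells) (fun y hy => ?_) ?_
  · refine (integrable_const_mul_iff hc.isUnit _).1 ?_
    simpa only [det_ofReal_mul_exp_moment] using Matrix.integrable_det_of_apply hint
  · have hys : ∀ m, y m ∈ Icc 0 (2 * π) := fun m => Ioc_subset_Icc_self (hcells m (hy m trivial))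
    have hsum := sum_mem_Ioo_of_mem_cellBox hy
    rw [hx0, hxlast] at hsum
    refine ⟨mul_pos (mul_pos (prod_pos_of_mem_cellBox hsupp hys hy)
      (prod_sin_pos_of_mem_cellBox hx.monotone (by rw [hx0, hxlast]; simp) hy)) (Real.exp_pos _),
      ?_, ?_⟩ <;> linarith [hsum.1, hsum.2]
  · filter_upwards [ae_pi_restrict_forall_mem measurableSet_Ioc] with y hy hyU
    simp only [prod_eq_zero_of_notMem_cellBox hpos hsupp (fun m => Ioc_subset_Icc_self (hy m)) hyU,
      zero_mul]
end

section
/- With X_k the H¹ solution of X'' = [(k−iα)² + λe^{-2y}]X, X(0)=1 (where ν = sign(k)(k−iα), λ = ωα − μ + iωk, Θ_ν(λ) ≠ 0), there exists C ≠ 0 such that X_k(y) = C e^{-sign(k)(k−iα)y} + O(e^{-(|k|+2)y}) as y → +∞. -/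
/-!
The series `Θ_ν` is entire: its coefficients `1 / (n! Γ(n+1+ν))` satisfy `c_{n+1} / c_n =
1 / ((n+1)(n+1+ν)) → 0`. Hence `Θ_ν(z) - Θ_ν(0) = O(z)` near `0`, and substituting
`z = λ e^{-2y} → 0` gives `X_k(y) - C e^{-νy} = O(e^{-2y} |e^{-νy}|) = O(e^{-(Re ν + 2) y})` with
`C = Θ_ν(0) / Θ_ν(λ)`. Finally `Re ν = |k|` and `Θ_ν(0) = 1 / Γ(1 + ν) ≠ 0`.
-/

open Complex Asymptotics Filter

/-- `Θ_ν(z) = Σ_{n≥0} (1/(n! Γ(n+1+ν))) (z/4)^n`. -/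
noncomputable def Theta (ν z : ℂ) : ℂ :=
  ∑' n : ℕ, (1 / ((n.factorial : ℂ) * Complex.Gamma ((n : ℂ) + 1 + ν))) * (z / 4) ^ n

open FormalMultilinearSeries Topology

noncomputable def thetaCoeff (ν : ℂ) (n : ℕ) : ℂ :=
  1 / ((n.factorial : ℂ) * Gamma ((n : ℂ) + 1 + ν))

lemma Theta_eq_ofScalarsSum (ν z : ℂ) : Theta ν z = ofScalarsSum (thetaCoeff ν) (z / 4) := by
  simp only [ofScalars_sum_eq, smul_eq_mul, Theta, thetaCoeff]

lemma one_le_re_natCast_add_one_add {ν : ℂ} {n : ℕ} (hn : ‖ν‖ ≤ n) :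
    1 ≤ ((n : ℂ) + 1 + ν).re := by
  simp only [add_re, natCast_re, one_re]
  linarith [neg_abs_le ν.re, abs_re_le_norm ν]

lemma thetaCoeff_ne_zero {ν : ℂ} {n : ℕ} (hn : ‖ν‖ ≤ n) : thetaCoeff ν n ≠ 0 :=
  one_div_ne_zero <| mul_ne_zero (by exact_mod_cast n.factorial_ne_zero)
    (Gamma_ne_zero_of_re_pos (one_pos.trans_le (one_le_re_natCast_add_one_add hn)))

lemma thetaCoeff_succ {ν : ℂ} {n : ℕ} (hn : (n : ℂ) + 1 + ν ≠ 0) :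
    thetaCoeff ν (n + 1) = thetaCoeff ν n / ((n + 1) * ((n : ℂ) + 1 + ν)) := by
  simp only [thetaCoeff, Nat.factorial_succ, Nat.cast_mul, Nat.cast_succ]
  rw [show (n : ℂ) + 1 + 1 + ν = (n + 1 + ν) + 1 by ring, Gamma_add_one _ hn]
  field_simp

lemma norm_thetaCoeff_succ_div_le {ν : ℂ} {n : ℕ} (hn : ‖ν‖ ≤ n) :
    ‖thetaCoeff ν (n + 1)‖ / ‖thetaCoeff ν n‖ ≤ 1 / (n + 1) := by
  have hs_norm : 1 ≤ ‖(n : ℂ) + 1 + ν‖ := (one_le_re_natCast_add_one_add hn).trans (re_le_norm _)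
  have hs : (n : ℂ) + 1 + ν ≠ 0 := norm_pos_iff.1 (one_pos.trans_le hs_norm)
  rw [thetaCoeff_succ hs, norm_div, div_div_cancel_left' (norm_ne_zero_iff.2 (thetaCoeff_ne_zero hn)),
    norm_mul, one_div]
  have hn1 : ‖(n : ℂ) + 1‖ = n + 1 := by exact_mod_cast norm_natCast (n + 1)
  rw [hn1]
  exact inv_anti₀ (by positivity) (le_mul_of_one_le_right (by positivity) hs_norm)

lemma radius_ofScalars_thetaCoeff (ν : ℂ) : (ofScalars ℂ (thetaCoeff ν)).radius = ⊤ := by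
  refine ofScalars_radius_eq_top_of_tendsto ℂ _ ?_ ?_
  · filter_upwards [eventually_ge_atTop ⌈‖ν‖⌉₊] with n hn
    exact thetaCoeff_ne_zero (Nat.ceil_le.1 hn)
  · refine squeeze_zero' (Eventually.of_forall fun n => by positivity) ?_
      tendsto_one_div_add_atTop_nhds_zero_nat
    filter_upwards [eventually_ge_atTop ⌈‖ν‖⌉₊] with n hn
    exact norm_thetaCoeff_succ_div_le (Nat.ceil_le.1 hn)

lemma differentiable_Theta (ν : ℂ) : Differentiable ℂ (Theta ν) := by
  have hp := radius_ofScalars_thetaCoeff ν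
  have hsum : Differentiable ℂ (ofScalarsSum (thetaCoeff ν) : ℂ → ℂ) := fun w =>
    (((ofScalars ℂ (thetaCoeff ν)).hasFPowerSeriesOnBall (by simp [hp])).analyticAt_of_mem
      (by simp [hp])).differentiableAt
  rw [funext (Theta_eq_ofScalarsSum ν)]
  fun_prop

lemma Theta_zero (ν : ℂ) : Theta ν 0 = 1 / Gamma (1 + ν) := by
  simp [Theta_eq_ofScalarsSum, thetaCoeff]

lemma Theta_zero_ne_zero {ν : ℂ} (hν : -1 < ν.re) : Theta ν 0 ≠ 0 := by
  rw [Theta_zero]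
  exact one_div_ne_zero (Gamma_ne_zero_of_re_pos (by rw [add_re, one_re]; linarith))

lemma norm_exp_mul_ofReal (c : ℂ) (y : ℝ) : ‖exp (c * y)‖ = Real.exp (c.re * y) := by
  simp [norm_exp]

theorem Theta_mul_exp_sub_isBigO (ν lam : ℂ) :
    (fun y : ℝ => Theta ν (lam * exp (-2 * y)) * exp (-ν * y) - Theta ν 0 * exp (-ν * y))
      =O[atTop] fun y => Real.exp (-(ν.re + 2) * y) := by
  have hz : (fun y : ℝ => lam * exp (-2 * y)) =O[atTop] fun y => Real.exp (-2 * y) :=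
    IsBigO.of_bound ‖lam‖ <| Eventually.of_forall fun y => by
      rw [norm_mul, norm_exp_mul_ofReal, Real.norm_of_nonneg (Real.exp_pos _).le]
      simp
  have hz_tendsto : Tendsto (fun y : ℝ => lam * exp (-2 * y)) atTop (𝓝 0) :=
    hz.trans_tendsto <| Real.tendsto_exp_atBot.comp <|
      tendsto_id.const_mul_atTop_of_neg (by norm_num)
  have hΘ : (fun y : ℝ => Theta ν (lam * exp (-2 * y)) - Theta ν 0)
      =O[atTop] fun y => Real.exp (-2 * y) :=
    ((differentiable_Theta ν 0).isBigO_sub.comp_tendsto hz_tendsto).trans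
      (hz.congr_left fun y => (sub_zero _).symm)
  have hE : (fun y : ℝ => exp (-ν * y)) =O[atTop] fun y => Real.exp (-ν.re * y) :=
    isBigO_of_le _ fun y => by
      rw [norm_exp_mul_ofReal, Real.norm_of_nonneg (Real.exp_pos _).le, neg_re]
  refine (hΘ.mul hE).congr (fun y => sub_mul _ _ _) fun y => ?_
  rw [← Real.exp_add]; ring_nf

theorem bvp_solution_asymptotics_general (k : ℤ) (α ω μ : ℝ)
    (hres : Theta ((Int.sign k : ℂ) * ((k : ℂ) - (α : ℂ) * Complex.I))
      (((ω * α - μ : ℝ) : ℂ) + Complex.I * ((ω : ℂ) * (k : ℂ))) ≠ 0) :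
    ∃ C : ℂ, C ≠ 0 ∧
      (fun y : ℝ =>
          Theta ((Int.sign k : ℂ) * ((k : ℂ) - (α : ℂ) * Complex.I))
              ((((ω * α - μ : ℝ) : ℂ) + Complex.I * ((ω : ℂ) * (k : ℂ))) *
                Complex.exp (-2 * (y : ℂ))) *
            Complex.exp (-((Int.sign k : ℂ) * ((k : ℂ) - (α : ℂ) * Complex.I)) * (y : ℂ)) /
            Theta ((Int.sign k : ℂ) * ((k : ℂ) - (α : ℂ) * Complex.I))
              (((ω * α - μ : ℝ) : ℂ) + Complex.I * ((ω : ℂ) * (k : ℂ)))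
          - C * Complex.exp (-((Int.sign k : ℂ) * ((k : ℂ) - (α : ℂ) * Complex.I)) * (y : ℂ)))
        =O[atTop] fun y : ℝ => Real.exp (-((|k| : ℝ) + 2) * y) := by
  set ν : ℂ := (Int.sign k : ℂ) * ((k : ℂ) - (α : ℂ) * Complex.I)
  set lam : ℂ := ((ω * α - μ : ℝ) : ℂ) + Complex.I * ((ω : ℂ) * (k : ℂ))
  have hre : ν.re = |(k : ℝ)| := by simp [ν, ← Int.cast_mul]
  refine ⟨Theta ν 0 / Theta ν lam,
    div_ne_zero (Theta_zero_ne_zero (by rw [hre]; linarith [abs_nonneg (k : ℝ)])) hres, ?_⟩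
  have h := (Theta_mul_exp_sub_isBigO ν lam).const_mul_left (Theta ν lam)⁻¹
  rw [hre] at h
  refine h.congr (fun y => ?_) fun _ => rfl
  field_simp

/-- With `ν = sign(k)(k−iα)`, `λ = ωα−μ+iωk`, `Θ_ν(λ) ≠ 0` and
`X_k(y) = Θ_ν(λe^{-2y})e^{-νy}/Θ_ν(λ)`, there exists `C ≠ 0` such that
`X_k(y) = C e^{-sign(k)(k−iα)y} + O(e^{-(|k|+2)y})` as `y → +∞`. -/
theorem bvp_solution_asymptotics (k : ℤ) (hk : k ≠ 0) (α ω μ : ℝ)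
    (hres : Theta ((Int.sign k : ℂ) * ((k : ℂ) - (α : ℂ) * Complex.I))
      (((ω * α - μ : ℝ) : ℂ) + Complex.I * ((ω : ℂ) * (k : ℂ))) ≠ 0) :
    ∃ C : ℂ, C ≠ 0 ∧
      (fun y : ℝ =>
          Theta ((Int.sign k : ℂ) * ((k : ℂ) - (α : ℂ) * Complex.I))
              ((((ω * α - μ : ℝ) : ℂ) + Complex.I * ((ω : ℂ) * (k : ℂ))) *
                Complex.exp (-2 * (y : ℂ))) *
            Complex.exp (-((Int.sign k : ℂ) * ((k : ℂ) - (α : ℂ) * Complex.I)) * (y : ℂ)) /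
            Theta ((Int.sign k : ℂ) * ((k : ℂ) - (α : ℂ) * Complex.I))
              (((ω * α - μ : ℝ) : ℂ) + Complex.I * ((ω : ℂ) * (k : ℂ)))
          - C * Complex.exp (-((Int.sign k : ℂ) * ((k : ℂ) - (α : ℂ) * Complex.I)) * (y : ℂ)))
        =O[atTop] fun y : ℝ => Real.exp (-((|k| : ℝ) + 2) * y) :=
  bvp_solution_asymptotics_general k α ω μ hres
end
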